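/- arXiv:1002.3702 — 4 statements merged into one kernel-verified Lean document; each statement's English description precedes it below -/
import Mathlib

section
/- Every subgroup of the infinite dihedral group which is an extension of a finite group by a cyclic group is itself cyclic. -/
/-!
A finite subgroup of `D∞` consists of reflections and `1`, since nontrivial rotations have
infinite order. So if the finite kernel is trivial, `H` embeds in the cyclic group `C`. Otherwise
it contains a reflection `s`, and for every `h ∈ H` the commutator `⁅h, s⁆` is a rotation lying
in the kernel, hence trivial; but the centralizer of a reflection in `D∞` is `{1, s}`.
-/

open scoped commutatorElement

namespace DihedralGroup

theorem isOfFinOrder_r_iff {k : ZMod 0} : IsOfFinOrder (r k) ↔ k = 0 := by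
  refine ⟨fun h => ?_, by rintro rfl; exact r_zero ▸ IsOfFinOrder.one⟩
  obtain ⟨n, hn, hpow⟩ := isOfFinOrder_iff_pow_eq_one.mp h
  rw [r_pow, ← r_zero, r.injEq] at hpow
  exact (mul_eq_zero.mp hpow).resolve_right (Nat.cast_ne_zero.mpr hn.ne')

theorem exists_eq_sr_of_isOfFinOrder {g : DihedralGroup 0} (hg : IsOfFinOrder g) (hne : g ≠ 1) :
    ∃ a, g = sr a := by
  cases g with
  | r k => exact absurd (r_zero ▸ congrArg r (isOfFinOrder_r_iff.mp hg)) hne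
  | sr a => exact ⟨a, rfl⟩

theorem commutatorElement_r_sr {n : ℕ} (b a : ZMod n) : ⁅r b, sr a⁆ = r (2 * b) := by
  simp only [commutatorElement_def, inv_r, inv_sr, r_mul_sr, sr_mul_r, sr_mul_sr]
  ring_nf

theorem commutatorElement_sr_sr {n : ℕ} (c a : ZMod n) : ⁅sr c, sr a⁆ = r (2 * (a - c)) := by
  simp only [commutatorElement_def, inv_sr, sr_mul_sr, r_mul_sr]
  ring_nf

theorem eq_one_or_eq_sr_of_isOfFinOrder_commutatorElement {g : DihedralGroup 0} {a : ZMod 0}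
    (h : IsOfFinOrder ⁅g, sr a⁆) : g = 1 ∨ g = sr a := by
  cases g with
  | r b =>
    rw [commutatorElement_r_sr, isOfFinOrder_r_iff, mul_eq_zero] at h
    exact .inl (by rw [h.resolve_left two_ne_zero, r_zero])
  | sr c =>
    rw [commutatorElement_sr_sr, isOfFinOrder_r_iff, mul_eq_zero, sub_eq_zero] at h
    exact .inr (by rw [h.resolve_left two_ne_zero])

theorem isCyclic_of_finite_normal_ne_bot {H : Subgroup (DihedralGroup 0)} {K : Subgroup H}
    [K.Normal] [Finite K] (hK : K ≠ ⊥) : IsCyclic H := by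
  have h_fin : ∀ x ∈ K, IsOfFinOrder (x : DihedralGroup 0) := fun x hx =>
    Submonoid.isOfFinOrder_coe.mpr <|
      Submonoid.isOfFinOrder_coe.mpr (isOfFinOrder_of_finite (⟨x, hx⟩ : K))
  obtain ⟨y, hyK, hy1⟩ := K.bot_or_exists_ne_one.resolve_left hK
  obtain ⟨a, hya⟩ := exists_eq_sr_of_isOfFinOrder (h_fin y hyK) (by exact_mod_cast hy1)
  have h_mem : ∀ h : H, h = 1 ∨ h = y := fun h => by
    have h_comm : ⁅h, y⁆ ∈ K := Subgroup.commutator_le_right ⊤ K <|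
      Subgroup.commutator_mem_commutator (Subgroup.mem_top h) hyK
    have h_comm_fin : IsOfFinOrder ⁅(h : DihedralGroup 0), sr a⁆ := by
      rw [← hya, ← Subgroup.coe_subtype, ← map_commutatorElement]
      exact h_fin _ h_comm
    exact (eq_one_or_eq_sr_of_isOfFinOrder_commutatorElement h_comm_fin).imp
      (fun h1 => Subtype.ext h1) (fun hy => Subtype.ext (hy.trans hya.symm))
  refine ⟨y, fun h => ?_⟩
  rcases h_mem h with h1 | hy
  exacts [⟨0, h1 ▸ zpow_zero y⟩, ⟨1, hy ▸ zpow_one y⟩]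

end DihedralGroup

/-- Every subgroup of the infinite dihedral group `D∞ = DihedralGroup 0` which is
finite-by-cyclic (admits a surjection onto a cyclic group with finite kernel)
is itself cyclic. -/
theorem stmt_2 (H : Subgroup (DihedralGroup 0))
    (hfbc : ∃ (C : Type) (_ : Group C) (f : H →* C),
      IsCyclic C ∧ Function.Surjective f ∧ Finite f.ker) :
    IsCyclic H := by
  obtain ⟨C, _, f, _, -, _⟩ := hfbc
  by_cases hK : f.ker = ⊥
  · exact isCyclic_of_injective f (f.ker_eq_bot_iff.mp hK)
  · exact DihedralGroup.isCyclic_of_finite_normal_ne_bot hK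
end

section
/- Let p: Γ → D∞ be a surjective group homomorphism with finite kernel. Then the pullback family p*(FBC) equals the family FBC of finite-by-cyclic subgroups of Γ. -/
/-- A group is finite-by-cyclic if it admits a surjection onto a cyclic group
with finite kernel. -/
def IsFiniteByCyclic (G : Type*) [Group G] : Prop :=
  ∃ (C : Type) (_ : Group C) (f : G →* C),
    IsCyclic C ∧ Function.Surjective f ∧ Finite f.ker


open Classical in
noncomputable def sec {G C : Type*} [Group G] [Group C] (f : G →* C) (c : C) : G :=
  if h : ∃ x, f x = c then h.choose else 1

lemma sec_spec {G C : Type*} [Group G] [Group C] (f : G →* C) (x : G) :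
    f (sec f (f x)) = f x := by
  unfold sec
  rw [dif_pos ⟨x, rfl⟩]
  exact (⟨x, rfl⟩ : ∃ y, f y = f x).choose_spec

lemma finite_comap {G C : Type*} [Group G] [Group C] (f : G →* C)
    (hker : Finite f.ker) (N : Subgroup C) (hN : Finite N) :
    Finite (N.comap f) := by
  apply Finite.of_injective (fun x : N.comap f =>
    ((⟨f x, x.2⟩ : N), (⟨(x : G) * (sec f (f (x : G)))⁻¹, by
      simp [MonoidHom.mem_ker, sec_spec]⟩ : f.ker)))
  intro a b h
  rw [Prod.ext_iff] at h
  obtain ⟨h1, h2⟩ := h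
  have hf : f (a : G) = f (b : G) := congrArg Subtype.val h1
  have h2' : (a : G) * (sec f (f (a : G)))⁻¹ = (b : G) * (sec f (f (b : G)))⁻¹ :=
    congrArg Subtype.val h2
  rw [hf] at h2'
  exact Subtype.ext (mul_right_cancel h2')

lemma fbc_of_surj {G H : Type*} [Group G] [Group H] (g : G →* H)
    (hs : Function.Surjective g) (hk : Finite g.ker) (hH : IsFiniteByCyclic H) :
    IsFiniteByCyclic G := by
  obtain ⟨C, _, f, hcyc, hfs, hfk⟩ := hH
  refine ⟨C, _, f.comp g, hcyc, hfs.comp hs, ?_⟩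
  rw [← MonoidHom.comap_ker]
  exact finite_comap g hk f.ker hfk

lemma fbc_of_quot {G H : Type*} [Group G] [Group H] (g : G →* H)
    (hs : Function.Surjective g) (hk : Finite g.ker) (hG : IsFiniteByCyclic G) :
    IsFiniteByCyclic H := by
  obtain ⟨C, _, f, hcyc, hfs, hfk⟩ := hG
  haveI := hcyc
  letI : CommGroup C := IsCyclic.commGroup
  set N : Subgroup C := g.ker.map f with hNdef
  have hNfin : Finite N := by
    have hset : (N : Set C).Finite := by
      have hc : (N : Set C) = f '' (g.ker : Set G) := by
        simp [hNdef, Subgroup.coe_map]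
      rw [hc]
      exact (Set.finite_coe_iff.mp hk).image f
    exact hset.to_subtype
  set ψ : G →* C ⧸ N := (QuotientGroup.mk' N).comp f with hψ
  have hψs : Function.Surjective ψ := (QuotientGroup.mk'_surjective N).comp hfs
  have hψker : ψ.ker = N.comap f := by
    rw [hψ, ← MonoidHom.comap_ker, QuotientGroup.ker_mk']
  have hψkfin : Finite ψ.ker := by
    rw [hψker]; exact finite_comap f hfk N hNfin
  have hle : g.ker ≤ ψ.ker := by
    intro x hx
    rw [hψker]
    exact Subgroup.mem_comap.mpr (Subgroup.mem_map_of_mem f hx)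
  set sinv := Function.surjInv hs
  set φ : H →* C ⧸ N := g.liftOfRightInverse sinv (Function.rightInverse_surjInv hs) ⟨ψ, hle⟩
    with hφ
  have hcomp : ∀ x, φ (g x) = ψ x := fun x =>
    g.liftOfRightInverse_comp_apply sinv (Function.rightInverse_surjInv hs) ⟨ψ, hle⟩ x
  refine ⟨C ⧸ N, _, φ, isCyclic_of_surjective _ (QuotientGroup.mk'_surjective N), ?_, ?_⟩
  · intro c
    obtain ⟨x, hx⟩ := hψs c
    exact ⟨g x, by rw [hcomp, hx]⟩
  · have : φ.ker = ψ.ker.map g := by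
      ext h
      constructor
      · intro hh
        have h1 : φ h = 1 := hh
        obtain ⟨x, hx⟩ := hs h
        refine ⟨x, ?_, hx⟩
        simp only [SetLike.mem_coe, MonoidHom.mem_ker]
        rw [← hcomp x, hx]
        exact h1
      · rintro ⟨x, hx, rfl⟩
        show φ (g x) = 1
        rw [hcomp]
        exact hx
    rw [this]
    have hset : ((ψ.ker.map g : Subgroup H) : Set H).Finite := by
      rw [Subgroup.coe_map]
      exact (Set.finite_coe_iff.mp hψkfin).image g
    exact hset.to_subtype

/-- If `p : Γ → D∞` is a surjective homomorphism with finite kernel, then the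
pullback `p*(FBC)` of the family of finite-by-cyclic subgroups of `D∞` equals
the family of finite-by-cyclic subgroups of `Γ`. -/
theorem stmt_4 {Γ : Type*} [Group Γ] (p : Γ →* DihedralGroup 0)
    (hsurj : Function.Surjective p) (hker : Finite p.ker) :
    {K : Subgroup Γ | IsFiniteByCyclic (K.map p)} =
      {K : Subgroup Γ | IsFiniteByCyclic K} := by
  ext K
  simp only [Set.mem_setOf_eq]
  have hs : Function.Surjective (p.subgroupMap K) := p.subgroupMap_surjective K
  have hk : Finite (p.subgroupMap K).ker := by
    apply Finite.of_injective (fun x : (p.subgroupMap K).ker =>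
      (⟨((x : K) : Γ), by
        have := x.2
        simp only [MonoidHom.mem_ker] at this ⊢
        exact congrArg Subtype.val this⟩ : p.ker))
    intro a b h
    simp only [Subtype.mk.injEq] at h
    exact Subtype.ext (Subtype.ext h)
  constructor
  · exact fun h => fbc_of_surj (p.subgroupMap K) hs hk h
  · exact fun h => fbc_of_quot (p.subgroupMap K) hs hk h
end

section
/- Let V₀ and V₁ be the open balls of radius 1/2 in ℝ² around (0,0) and (1/2,1/2) respectively, and let C∞ = ⟨s⟩ ≤ D∞ act diagonally on ℝ². Then the collection V' = { g·V₀ : g ∈ C∞ } ∪ { g·V₁ : g ∈ C∞ } covers the diagonal Δ = { (x,x) : x ∈ ℝ }; moreover for every element of V', its stabilizer in D∞ (under the diagonal action) is finite, and for every g ∈ D∞ and V ∈ V', either g·V ∩ V = ∅ or g·V = V. -/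
open DihedralGroup

/-- The standard action of `D∞ = DihedralGroup 0` on `ℝ`. -/
noncomputable def dinfSmul : DihedralGroup 0 → ℝ → ℝ
  | r i, x => x + ((show ℤ from i) : ℝ)
  | sr i, x => -x - ((show ℤ from i) : ℝ)

/-- The diagonal `D∞`-action on `ℝ²`. -/
noncomputable def dinfSmul2 (g : DihedralGroup 0) (p : ℝ × ℝ) : ℝ × ℝ :=
  (dinfSmul g p.1, dinfSmul g p.2)

/-- The collection `V' = {g·V₀ : g ∈ C∞} ∪ {g·V₁ : g ∈ C∞}`, where `V₀, V₁` are
the open balls of radius `1/2` around `(0,0)` and `(1/2,1/2)`, and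
`C∞ = ⟨s⟩ = {r n : n ∈ ℤ}` acts diagonally. -/
noncomputable def VColl : Set (Set (ℝ × ℝ)) :=
  {S | ∃ n : ℤ, S = dinfSmul2 (r (show ZMod 0 from n)) '' Metric.ball ((0 : ℝ), (0 : ℝ)) (1/2) ∨
       S = dinfSmul2 (r (show ZMod 0 from n)) '' Metric.ball ((1/2 : ℝ), (1/2 : ℝ)) (1/2)}

/-!
The members of `V'` are exactly the balls `B(c) = ball (c, c) (1/2)` with `c ∈ ½ℤ`. Since `D∞`
acts by isometries, `g · B(c) = B(g · c)`, and for `c ∈ ½ℤ` the displacement `g · c - c` is an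
integer. Two balls `B(a)`, `B(c)` with `a - c ∈ ℤ` either coincide or have centres at distance
`≥ 1`, hence are disjoint. A stabiliser of `B(c)` therefore fixes `c`, and a point of `ℝ` is
fixed by at most two elements of `D∞`.
-/

open Metric

lemma exists_isometryEquiv_coe_eq_dinfSmul2 (g : DihedralGroup 0) :
    ∃ e : (ℝ × ℝ) ≃ᵢ (ℝ × ℝ), ⇑e = dinfSmul2 g := by
  rcases g with i | i <;> change ℤ at i
  · exact ⟨IsometryEquiv.addRight ((i : ℝ), (i : ℝ)), rfl⟩
  · exact ⟨(IsometryEquiv.neg _).trans (IsometryEquiv.subRight ((i : ℝ), (i : ℝ))), rfl⟩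

lemma dinfSmul2_image_ball (g : DihedralGroup 0) (p : ℝ × ℝ) (ρ : ℝ) :
    dinfSmul2 g '' ball p ρ = ball (dinfSmul2 g p) ρ := by
  obtain ⟨e, he⟩ := exists_isometryEquiv_coe_eq_dinfSmul2 g
  rw [← he]
  exact e.image_ball p ρ

lemma dist_diag (a c : ℝ) : dist ((a, a) : ℝ × ℝ) (c, c) = |a - c| := by
  simp [Prod.dist_eq, Real.dist_eq]

lemma eq_of_sub_eq_intCast_of_abs_sub_lt_one {a c : ℝ} (k : ℤ) (hk : a - c = k)
    (h : |a - c| < 1) : a = c := by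
  rw [hk] at h
  have : k = 0 := Int.abs_lt_one_iff.1 (by exact_mod_cast h)
  linarith [show (k : ℝ) = 0 by exact_mod_cast this]

lemma ball_diag_disjoint_or_eq {a c : ℝ} (k : ℤ) (hk : a - c = k) :
    Disjoint (ball ((a, a) : ℝ × ℝ) (1/2)) (ball (c, c) (1/2)) ∨
      ball ((a, a) : ℝ × ℝ) (1/2) = ball (c, c) (1/2) := by
  rcases lt_or_ge |a - c| 1 with h | h
  · rw [eq_of_sub_eq_intCast_of_abs_sub_lt_one k hk h]
    exact Or.inr rfl
  · exact Or.inl (ball_disjoint_ball (by rw [dist_diag]; linarith))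

lemma eq_of_ball_diag_eq {a c : ℝ} (k : ℤ) (hk : a - c = k)
    (h : ball ((a, a) : ℝ × ℝ) (1/2) = ball (c, c) (1/2)) : a = c := by
  have hmem : ((a, a) : ℝ × ℝ) ∈ ball (c, c) (1/2) := h ▸ mem_ball_self (by norm_num)
  rw [mem_ball, dist_diag] at hmem
  exact eq_of_sub_eq_intCast_of_abs_sub_lt_one k hk (by linarith)

lemma exists_dinfSmul_half_sub_eq_intCast (g : DihedralGroup 0) (t : ℤ) :
    ∃ k : ℤ, dinfSmul g (t / 2) - t / 2 = k := by
  rcases g with i | i <;> change ℤ at i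
  · exact ⟨i, by simp [dinfSmul]⟩
  · exact ⟨-t - i, by simp only [dinfSmul]; push_cast; ring⟩

lemma finite_setOf_dinfSmul_eq (x : ℝ) : {g : DihedralGroup 0 | dinfSmul g x = x}.Finite := by
  refine ((Set.finite_singleton (sr (-round (2 * x)))).insert (r 0)).subset ?_
  rintro (i | i) (h : dinfSmul _ x = x) <;> change ℤ at i <;> simp only [dinfSmul] at h
  · have : i = 0 := by exact_mod_cast (show (i : ℝ) = 0 by linarith)
    exact Or.inl (congrArg r this)
  · have : round (2 * x) = -i := by
      rw [show 2 * x = ((-i : ℤ) : ℝ) by push_cast; linarith, round_intCast]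
    exact Or.inr (congrArg sr (by rw [this, neg_neg]))

lemma mem_VColl_iff {S : Set (ℝ × ℝ)} :
    S ∈ VColl ↔ ∃ t : ℤ, S = ball (((t : ℝ) / 2, (t : ℝ) / 2)) (1/2) := by
  simp only [VColl, Set.mem_ofPred_eq, dinfSmul2_image_ball]
  constructor
  · rintro ⟨n, rfl | rfl⟩
    · exact ⟨2 * n, by simp [dinfSmul2, dinfSmul]⟩
    · exact ⟨2 * n + 1, by simp only [dinfSmul2, dinfSmul]; push_cast; ring_nf⟩
  · rintro ⟨t, rfl⟩
    obtain ⟨n, rfl | rfl⟩ := Int.even_or_odd' t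
    · exact ⟨n, Or.inl (by simp [dinfSmul2, dinfSmul])⟩
    · exact ⟨n, Or.inr (by simp only [dinfSmul2, dinfSmul]; push_cast; ring_nf)⟩

/-- The collection `V'` covers the diagonal `Δ ⊂ ℝ²`, each of its members has
finite stabilizer in `D∞`, and for every `g ∈ D∞` and `V ∈ V'` either
`g·V ∩ V = ∅` or `g·V = V`. -/
theorem stmt_10 :
    (∀ x : ℝ, ∃ S ∈ VColl, ((x, x) : ℝ × ℝ) ∈ S) ∧
    (∀ S ∈ VColl, Set.Finite {g : DihedralGroup 0 | dinfSmul2 g '' S = S}) ∧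
    (∀ g : DihedralGroup 0, ∀ S ∈ VColl,
      (dinfSmul2 g '' S) ∩ S = ∅ ∨ dinfSmul2 g '' S = S) := by
  refine ⟨fun x => ?_, fun S hS => ?_, fun g S hS => ?_⟩
  · refine ⟨_, mem_VColl_iff.2 ⟨round (2 * x), rfl⟩, ?_⟩
    have hround := abs_le.1 (abs_sub_round (2 * x))
    rw [mem_ball, dist_diag, abs_lt]
    constructor <;> linarith [hround.1, hround.2]
  · obtain ⟨t, rfl⟩ := mem_VColl_iff.1 hS
    refine (finite_setOf_dinfSmul_eq (t / 2)).subset fun g (hg : dinfSmul2 g '' _ = _) => ?_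
    obtain ⟨k, hk⟩ := exists_dinfSmul_half_sub_eq_intCast g t
    rw [dinfSmul2_image_ball] at hg
    exact eq_of_ball_diag_eq k hk hg
  · obtain ⟨t, rfl⟩ := mem_VColl_iff.1 hS
    obtain ⟨k, hk⟩ := exists_dinfSmul_half_sub_eq_intCast g t
    rw [dinfSmul2_image_ball, ← Set.disjoint_iff_inter_eq_empty]
    exact ball_diag_disjoint_or_eq k hk
end

section
/- Suppose we have a commutative diagram of abelian groups with exact rows ⋯ → Dₙ → Aₙ₋₁ → Bₙ₋₁ ⊕ Cₙ₋₁ → Dₙ₋₁ → ⋯ mapping to ⋯ → D'ₙ → A'ₙ₋₁ → B'ₙ₋₁ ⊕ C'ₙ₋₁ → D'ₙ₋₁ → ⋯, in which each vertical map Bₙ ⊕ Cₙ → B'ₙ ⊕ C'ₙ is an isomorphism. Then there is a long exact sequence ⋯ → Dₙ → D'ₙ ⊕ Aₙ₋₁ → A'ₙ₋₁ → Dₙ₋₁ → ⋯, where the first map combines the vertical map Dₙ → D'ₙ and the boundary Dₙ → Aₙ₋₁, the second map is the difference of the induced maps, and the third is the composite A'ₙ₋₁ → B'ₙ₋₁ ⊕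 C'ₙ₋₁ ≅ Bₙ₋₁ ⊕ Cₙ₋₁ → Dₙ₋₁. -/
/-- Given a map of long exact sequences of abelian groups
`⋯ → Dₙ → Aₙ₋₁ → Bₙ₋₁ ⊕ Cₙ₋₁ → Dₙ₋₁ → ⋯` (top) to the primed bottom row,
in which every vertical map `Bₙ ⊕ Cₙ → B'ₙ ⊕ C'ₙ` is an isomorphism, there is
a long exact sequence `⋯ → Dₙ → D'ₙ ⊕ Aₙ₋₁ → A'ₙ₋₁ → Dₙ₋₁ → ⋯`, where the
first map combines the vertical map and the boundary, the second is the
difference of the induced maps, and the third is the composite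
`A'ₙ₋₁ → B'ₙ₋₁ ⊕ C'ₙ₋₁ ≅ Bₙ₋₁ ⊕ Cₙ₋₁ → Dₙ₋₁`. -/
theorem stmt_17
    (A BC D A' BC' D' : ℤ → Type*)
    [∀ n, AddCommGroup (A n)] [∀ n, AddCommGroup (BC n)] [∀ n, AddCommGroup (D n)]
    [∀ n, AddCommGroup (A' n)] [∀ n, AddCommGroup (BC' n)] [∀ n, AddCommGroup (D' n)]
    -- top row
    (α : ∀ n, A n →+ BC n) (β : ∀ n, BC n →+ D n) (δ : ∀ n, D n →+ A (n - 1))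
    -- bottom row
    (α' : ∀ n, A' n →+ BC' n) (β' : ∀ n, BC' n →+ D' n) (δ' : ∀ n, D' n →+ A' (n - 1))
    -- vertical maps, the middle one an isomorphism
    (a : ∀ n, A n →+ A' n) (bc : ∀ n, BC n ≃+ BC' n) (d : ∀ n, D n →+ D' n)
    -- exactness of the rows
    (hex1 : ∀ n, Function.Exact (α n) (β n))
    (hex2 : ∀ n, Function.Exact (β n) (δ n))
    (hex3 : ∀ n, Function.Exact (δ n) (α (n - 1)))
    (hex1' : ∀ n, Function.Exact (α' n) (β' n))
    (hex2' : ∀ n, Function.Exact (β' n) (δ' n))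
    (hex3' : ∀ n, Function.Exact (δ' n) (α' (n - 1)))
    -- commutativity of the diagram
    (hc1 : ∀ (n : ℤ) (x : A n), α' n (a n x) = bc n (α n x))
    (hc2 : ∀ (n : ℤ) (x : BC n), β' n (bc n x) = d n (β n x))
    (hc3 : ∀ (n : ℤ) (x : D n), δ' n (d n x) = a (n - 1) (δ n x)) :
    -- the resulting long exact sequence
    (∀ n : ℤ, Function.Exact
        (fun x : D n => ((d n x, δ n x) : D' n × A (n - 1)))
        (fun p : D' n × A (n - 1) => δ' n p.1 - a (n - 1) p.2)) ∧
    (∀ n : ℤ, Function.Exact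
        (fun p : D' n × A (n - 1) => δ' n p.1 - a (n - 1) p.2)
        (fun x : A' (n - 1) => β (n - 1) ((bc (n - 1)).symm (α' (n - 1) x)))) ∧
    (∀ n : ℤ, Function.Exact
        (fun x : A' n => β n ((bc n).symm (α' n x)))
        (fun x : D n => ((d n x, δ n x) : D' n × A (n - 1)))) := by

  refine ⟨?_, ?_, ?_⟩
  · -- exactness at D'ₙ × Aₙ₋₁
    intro n pq
    obtain ⟨p, q⟩ := pq
    constructor
    · intro h
      have h1 : δ' n p = a (n - 1) q := by
        have := sub_eq_zero.mp h
        simpa using this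
      have h2 : α (n - 1) q = 0 := by
        apply (bc (n - 1)).injective
        rw [map_zero, ← hc1, ← h1]
        exact (hex3' n).apply_apply_eq_zero p
      obtain ⟨x₀, hx₀⟩ := (hex3 n q).mp h2
      have h3 : δ' n (p - d n x₀) = 0 := by
        rw [map_sub, hc3, hx₀, h1, sub_self]
      obtain ⟨y', hy'⟩ := (hex2' n _).mp h3
      refine ⟨x₀ + β n ((bc n).symm y'), ?_⟩
      have hd : d n (x₀ + β n ((bc n).symm y')) = p := by
        rw [map_add, ← hc2, (bc n).apply_symm_apply, hy']
        abel
      have hδ : δ n (x₀ + β n ((bc n).symm y')) = q := by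
        rw [map_add, hx₀, (hex2 n).apply_apply_eq_zero, add_zero]
      simp only [hd, hδ]
    · rintro ⟨x, hx⟩
      have hp : d n x = p := congrArg Prod.fst hx
      have hq : δ n x = q := congrArg Prod.snd hx
      simp only []
      rw [← hp, ← hq, hc3, sub_self]
  · -- exactness at A'ₙ₋₁
    intro n x
    constructor
    · intro h
      have hz : β (n - 1) ((bc (n - 1)).symm (α' (n - 1) x)) = 0 := h
      obtain ⟨q₀, hq₀⟩ := (hex1 (n - 1) _).mp hz
      have h2 : α' (n - 1) (x - a (n - 1) q₀) = 0 := by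
        rw [map_sub, hc1, hq₀, (bc (n - 1)).apply_symm_apply, sub_self]
      obtain ⟨p, hp⟩ := (hex3' n _).mp h2
      refine ⟨(p, -q₀), ?_⟩
      simp only [map_neg, hp]
      abel
    · rintro ⟨⟨p, q⟩, hpq⟩
      simp only [] at hpq ⊢
      rw [← hpq, map_sub, hc1, (hex3' n).apply_apply_eq_zero p, zero_sub, map_neg,
        (bc (n - 1)).symm_apply_apply, map_neg, (hex1 (n - 1)).apply_apply_eq_zero,
        neg_zero]
  · -- exactness at Dₙ
    intro n x
    constructor
    · intro h
      have hp : d n x = 0 := congrArg Prod.fst h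
      have hq : δ n x = 0 := congrArg Prod.snd h
      obtain ⟨y, hy⟩ := (hex2 n x).mp hq
      have h2 : β' n (bc n y) = 0 := by rw [hc2, hy, hp]
      obtain ⟨w, hw⟩ := (hex1' n _).mp h2
      refine ⟨w, ?_⟩
      simp only [hw, (bc n).symm_apply_apply, hy]
    · rintro ⟨w, hw⟩
      simp only [] at hw ⊢
      rw [← hw, Prod.mk_eq_zero]
      constructor
      · rw [← hc2, (bc n).apply_symm_apply, (hex1' n).apply_apply_eq_zero]
      · exact (hex2 n).apply_apply_eq_zero _
end
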